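/- Let Π be a probability measure on ℝ and let g₂(p) = ∫_ℝ (1/2)[exp(h·cv₂(p) − h²/2) + exp(−h·cv₂(p) − h²/2)] dΠ(h). Then g₂ is completely monotone on (0,1): for every integer k ≥ 0 and every p ∈ (0,1), 0 ≤ (−1)^k g₂^{(k)}(p). -/

import Mathlib

open MeasureTheory

/-- The standard normal density φ(x) = (2π)^{-1/2} exp(-x²/2). -/
noncomputable def stdNormalPdf (x : ℝ) : ℝ :=
  (Real.sqrt (2 * Real.pi))⁻¹ * Real.exp (-x ^ 2 / 2)

/-- The standard normal CDF Φ(x) = ∫_{-∞}^x φ(t) dt. -/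
noncomputable def stdNormalCdf (x : ℝ) : ℝ :=
  ∫ t in Set.Iic x, stdNormalPdf t

/-!
With `G c = ∫ cosh (h c) e^{-h²/2} dΠ(h)` we have `g₂ = G ∘ cv`. The `n`-th derivative of `G` is
`∫ hⁿ cosh⁽ⁿ⁾(h c) e^{-h²/2} dΠ(h)`, which is nonnegative for `c ≥ 0`: `G` is absolutely monotone
on `[0, ∞)`. On `(0, 1)` the critical value is positive, and the inverse function theorem applied
to `Φ (cv p) = 1 - p / 2` gives `cv' = -ψ ∘ cv` with `ψ = (2φ)⁻¹`, which is absolutely monotone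
because `ψ' = c ψ`. Hence `(G ∘ cv)⁽ᵏ⁾ = (-1)ᵏ Gₖ ∘ cv` with `G₀ = G`, `Gₖ₊₁ = Gₖ' ψ`, and each
`Gₖ` is again absolutely monotone by the Leibniz rule, so in particular nonnegative.
-/

open Set Real Filter Topology ProbabilityTheory
open scoped ContDiff Nat

namespace AbsolutelyMonotoneOn

variable {f g : ℝ → ℝ} {s : Set ℝ}

theorem mono (hf : AbsolutelyMonotoneOn f s) {t : Set ℝ} (hts : t ⊆ s) :
    AbsolutelyMonotoneOn f t :=
  let ⟨p, hp, hp₀⟩ := hf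
  ⟨p, hp.mono hts, fun n _ hx => hp₀ n (hts hx)⟩

theorem iff_of_isOpen (hs : IsOpen s) :
    AbsolutelyMonotoneOn f s ↔
      ContDiffOn ℝ ∞ f s ∧ ∀ n : ℕ, ∀ x ∈ s, 0 ≤ iteratedDeriv n f x := by
  rw [iff_iteratedDerivWithin_nonneg hs.uniqueDiffOn]
  refine and_congr_right fun _ => forall_congr' fun n => forall₂_congr fun x hx => ?_
  rw [iteratedDerivWithin_of_isOpen hs hx]

theorem iteratedDeriv_nonneg (hf : AbsolutelyMonotoneOn f s) (hs : IsOpen s) (n : ℕ) {x : ℝ}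
    (hx : x ∈ s) : 0 ≤ iteratedDeriv n f x :=
  ((iff_of_isOpen hs).mp hf).2 n x hx

theorem iteratedDeriv_mul_nonneg (hf : AbsolutelyMonotoneOn f s) (hs : IsOpen s)
    (hg : ContDiffOn ℝ ∞ g s) (n : ℕ) {x : ℝ} (hx : x ∈ s)
    (hgn : ∀ i ≤ n, 0 ≤ iteratedDeriv i g x) : 0 ≤ iteratedDeriv n (f * g) x := by
  have hxs : s ∈ 𝓝 x := hs.mem_nhds hx
  rw [iteratedDeriv_mul ((hf.contDiffOn.of_le (mod_cast le_top)).contDiffAt hxs)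
    ((hg.of_le (mod_cast le_top)).contDiffAt hxs)]
  refine Finset.sum_nonneg fun i _ => ?_
  have := hf.iteratedDeriv_nonneg hs i hx
  have := hgn (n - i) (Nat.sub_le n i)
  positivity

theorem mul (hf : AbsolutelyMonotoneOn f s) (hg : AbsolutelyMonotoneOn g s) (hs : IsOpen s) :
    AbsolutelyMonotoneOn (f * g) s :=
  (iff_of_isOpen hs).mpr ⟨hf.contDiffOn.mul hg.contDiffOn, fun n _ hx =>
    hf.iteratedDeriv_mul_nonneg hs hg.contDiffOn n hx fun i _ => hg.iteratedDeriv_nonneg hs i hx⟩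

theorem deriv (hf : AbsolutelyMonotoneOn f s) (hs : IsOpen s) :
    AbsolutelyMonotoneOn (deriv f) s :=
  (iff_of_isOpen hs).mpr ⟨hf.contDiffOn.deriv_of_isOpen hs le_rfl, fun n _ hx => by
    simpa only [iteratedDeriv_succ'] using hf.iteratedDeriv_nonneg hs (n + 1) hx⟩

theorem of_deriv_eq_mul (hs : IsOpen s) (hf : ContDiffOn ℝ ∞ f s)
    (hf₀ : ∀ x ∈ s, 0 ≤ f x) (hg : AbsolutelyMonotoneOn g s) (hfg : _root_.deriv f = g * f) :
    AbsolutelyMonotoneOn f s := by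
  refine (iff_of_isOpen hs).mpr ⟨hf, fun n => ?_⟩
  induction n using Nat.strong_induction_on with
  | _ n ih =>
    intro x hx
    cases n with
    | zero => simpa using hf₀ x hx
    | succ n =>
      rw [iteratedDeriv_succ', hfg]
      exact hg.iteratedDeriv_mul_nonneg hs hf n hx fun i hi => ih i (by omega) x hx

end AbsolutelyMonotoneOn

theorem absolutelyMonotoneOn_id : AbsolutelyMonotoneOn id (Ici 0) :=
  .of_contDiff contDiff_id fun n x hx => by
    rw [iteratedDeriv_id]
    split_ifs <;> simp_all

theorem AbsolutelyMonotoneOn.exists_iteratedDeriv_comp_eq {F ψ u : ℝ → ℝ} {s U : Set ℝ}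
    (hs : IsOpen s) (hU : IsOpen U) (hF : AbsolutelyMonotoneOn F s)
    (hψ : AbsolutelyMonotoneOn ψ s) (hus : MapsTo u U s)
    (hu : ∀ p ∈ U, HasDerivAt u (-ψ (u p)) p) (k : ℕ) :
    ∃ Fₖ, AbsolutelyMonotoneOn Fₖ s ∧
      EqOn (iteratedDeriv k (F ∘ u)) (fun p => (-1) ^ k * Fₖ (u p)) U := by
  induction k with
  | zero => exact ⟨F, hF, fun p _ => by simp⟩
  | succ k ih =>
    obtain ⟨Fₖ, hFₖ, hEq⟩ := ih
    refine ⟨_root_.deriv Fₖ * ψ, (hFₖ.deriv hs).mul hψ hs, fun p hp => ?_⟩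
    have hdiff : DifferentiableAt ℝ Fₖ (u p) :=
      (hFₖ.contDiffOn.differentiableOn (by simp)).differentiableAt (hs.mem_nhds (hus hp))
    have hderiv : HasDerivAt (fun q => (-1) ^ k * Fₖ (u q))
        ((-1) ^ k * (_root_.deriv Fₖ (u p) * -ψ (u p))) p :=
      (hdiff.hasDerivAt.comp p (hu p hp)).const_mul _
    rw [iteratedDeriv_succ, (hEq.eventuallyEq_of_mem (hU.mem_nhds hp)).deriv_eq, hderiv.deriv]
    simp only [Pi.mul_apply, pow_succ]
    ring

theorem AbsolutelyMonotoneOn.neg_one_pow_mul_iteratedDeriv_comp_nonneg {F ψ u : ℝ → ℝ}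
    {s U : Set ℝ} (hs : IsOpen s) (hU : IsOpen U) (hF : AbsolutelyMonotoneOn F s)
    (hψ : AbsolutelyMonotoneOn ψ s) (hus : MapsTo u U s)
    (hu : ∀ p ∈ U, HasDerivAt u (-ψ (u p)) p) (k : ℕ) {p : ℝ} (hp : p ∈ U) :
    0 ≤ (-1) ^ k * iteratedDeriv k (F ∘ u) p := by
  obtain ⟨Fₖ, hFₖ, hEq⟩ := hF.exists_iteratedDeriv_comp_eq hs hU hψ hus hu k
  rw [hEq hp, ← mul_assoc, ← pow_add, Even.neg_one_pow ⟨k, rfl⟩, one_mul]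
  simpa using hFₖ.iteratedDeriv_nonneg hs 0 (hus hp)

theorem abs_iteratedDeriv_cosh_le_exp_abs (n : ℕ) (x : ℝ) :
    |iteratedDeriv n cosh x| ≤ exp |x| := by
  have hcosh : cosh x ≤ exp |x| := by
    rw [← cosh_abs, ← cosh_add_sinh |x|]
    exact le_add_of_nonneg_right (sinh_nonneg_iff.mpr (abs_nonneg x))
  obtain ⟨m, rfl | rfl⟩ := n.even_or_odd'
  · rw [iteratedDeriv_even_cosh, abs_of_pos (cosh_pos x)]
    exact hcosh
  · rw [iteratedDeriv_odd_cosh, abs_sinh]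
    exact (sinh_lt_cosh _).le.trans (by rwa [cosh_abs])

theorem pow_mul_iteratedDeriv_cosh_mul_nonneg (n : ℕ) (h : ℝ) {c : ℝ} (hc : 0 ≤ c) :
    0 ≤ h ^ n * iteratedDeriv n cosh (h * c) := by
  obtain ⟨m, rfl | rfl⟩ := n.even_or_odd'
  · rw [iteratedDeriv_even_cosh]
    exact mul_nonneg (Even.pow_nonneg ⟨m, two_mul m⟩ h) (cosh_pos _).le
  · rw [iteratedDeriv_odd_cosh, pow_succ, pow_mul, mul_assoc]
    refine mul_nonneg (pow_nonneg (sq_nonneg h) m) ?_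
    rcases le_total 0 h with hh | hh
    · exact mul_nonneg hh (sinh_nonneg_iff.mpr (mul_nonneg hh hc))
    · exact mul_nonneg_of_nonpos_of_nonpos hh
        (sinh_nonpos_iff.mpr (mul_nonpos_of_nonpos_of_nonneg hh hc))

theorem pow_abs_mul_exp_mul_abs_sub_le (n : ℕ) (C h : ℝ) :
    |h| ^ n * exp (C * |h| - h ^ 2 / 2) ≤ n ! * exp ((C + 1) ^ 2 / 2) := by
  have hpow : |h| ^ n ≤ n ! * exp |h| := by
    have := pow_div_factorial_le_exp _ (abs_nonneg h) n
    rwa [div_le_iff₀ (by positivity), mul_comm] at this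
  calc |h| ^ n * exp (C * |h| - h ^ 2 / 2)
      ≤ n ! * exp |h| * exp (C * |h| - h ^ 2 / 2) := by gcongr
    _ = n ! * exp ((C + 1) * |h| - h ^ 2 / 2) := by rw [mul_assoc, ← exp_add]; ring_nf
    _ ≤ n ! * exp ((C + 1) ^ 2 / 2) := by
        gcongr
        nlinarith [sq_nonneg (|h| - (C + 1)), sq_abs h]

noncomputable def gaussianCoshTransform (μ : Measure ℝ) (c : ℝ) : ℝ :=
  ∫ h, cosh (h * c) * exp (-h ^ 2 / 2) ∂μ

noncomputable def gaussianCoshKernel (n : ℕ) (h c : ℝ) : ℝ :=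
  h ^ n * iteratedDeriv n cosh (h * c) * exp (-h ^ 2 / 2)

theorem continuous_gaussianCoshKernel (n : ℕ) (c : ℝ) :
    Continuous fun h => gaussianCoshKernel n h c := by
  have := (differentiable_iteratedDeriv_cosh n).continuous
  unfold gaussianCoshKernel
  fun_prop

theorem hasDerivAt_gaussianCoshKernel (n : ℕ) (h c : ℝ) :
    HasDerivAt (gaussianCoshKernel n h) (gaussianCoshKernel (n + 1) h c) c := by
  have hd := ((differentiable_iteratedDeriv_cosh n) (h * c)).hasDerivAt
  rw [← iteratedDeriv_succ] at hd
  have := ((hd.comp c ((hasDerivAt_id c).const_mul h)).const_mul (h ^ n)).mul_const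
    (exp (-h ^ 2 / 2))
  exact this.congr_deriv (by simp only [gaussianCoshKernel, pow_succ]; ring)

theorem abs_gaussianCoshKernel_le (n : ℕ) (h : ℝ) {c C : ℝ} (hc : |c| ≤ C) :
    |gaussianCoshKernel n h c| ≤ n ! * exp ((C + 1) ^ 2 / 2) := by
  calc |gaussianCoshKernel n h c|
      = |h| ^ n * |iteratedDeriv n cosh (h * c)| * exp (-h ^ 2 / 2) := by
        simp only [gaussianCoshKernel, abs_mul, abs_pow, abs_exp]
    _ ≤ |h| ^ n * exp (C * |h|) * exp (-h ^ 2 / 2) := by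
        gcongr
        refine (abs_iteratedDeriv_cosh_le_exp_abs n _).trans (exp_le_exp.mpr ?_)
        rw [abs_mul, mul_comm]
        gcongr
    _ = |h| ^ n * exp (C * |h| - h ^ 2 / 2) := by rw [mul_assoc, ← exp_add]; ring_nf
    _ ≤ n ! * exp ((C + 1) ^ 2 / 2) := pow_abs_mul_exp_mul_abs_sub_le n C h

section GaussianCoshTransform

variable (μ : Measure ℝ) [IsFiniteMeasure μ]

theorem integrable_gaussianCoshKernel (n : ℕ) (c : ℝ) :
    Integrable (fun h => gaussianCoshKernel n h c) μ :=
  Integrable.mono' (integrable_const _) (continuous_gaussianCoshKernel n c).aestronglyMeasurable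
    (Eventually.of_forall fun h => abs_gaussianCoshKernel_le n h le_rfl)

theorem hasDerivAt_integral_gaussianCoshKernel (n : ℕ) (c₀ : ℝ) :
    HasDerivAt (fun c => ∫ h, gaussianCoshKernel n h c ∂μ)
      (∫ h, gaussianCoshKernel (n + 1) h c₀ ∂μ) c₀ := by
  have hball : ∀ c ∈ Metric.ball c₀ 1, |c| ≤ |c₀| + 1 := fun c hc => by
    have := abs_sub_abs_le_abs_sub c c₀
    rw [Metric.mem_ball, dist_eq_norm, Real.norm_eq_abs] at hc
    linarith
  exact (hasDerivAt_integral_of_dominated_loc_of_deriv_le (Metric.ball_mem_nhds c₀ one_pos)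
    (Eventually.of_forall fun c => (continuous_gaussianCoshKernel n c).aestronglyMeasurable)
    (integrable_gaussianCoshKernel μ n c₀)
    (continuous_gaussianCoshKernel (n + 1) c₀).aestronglyMeasurable
    (Eventually.of_forall fun h c hc => abs_gaussianCoshKernel_le (n + 1) h (hball c hc))
    (integrable_const _)
    (Eventually.of_forall fun h c _ => hasDerivAt_gaussianCoshKernel n h c)).2

theorem iteratedDeriv_gaussianCoshTransform (n : ℕ) :
    iteratedDeriv n (gaussianCoshTransform μ) =
      fun c => ∫ h, gaussianCoshKernel n h c ∂μ := by
  induction n with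
  | zero => ext c; simp [gaussianCoshTransform, gaussianCoshKernel]
  | succ n ih =>
    ext c
    rw [iteratedDeriv_succ, ih, (hasDerivAt_integral_gaussianCoshKernel μ n c).deriv]

theorem absolutelyMonotoneOn_gaussianCoshTransform :
    AbsolutelyMonotoneOn (gaussianCoshTransform μ) (Ici 0) := by
  refine .of_contDiff (contDiff_of_differentiable_iteratedDeriv fun m _ => ?_) fun n c hc => ?_
  · rw [iteratedDeriv_gaussianCoshTransform]
    exact fun c => (hasDerivAt_integral_gaussianCoshKernel μ m c).differentiableAt
  · rw [iteratedDeriv_gaussianCoshTransform]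
    exact integral_nonneg fun h => mul_nonneg
      (pow_mul_iteratedDeriv_cosh_mul_nonneg n h hc) (exp_pos _).le

end GaussianCoshTransform

theorem stdNormalPdf_eq_gaussianPDFReal : stdNormalPdf = gaussianPDFReal 0 1 := by
  ext x
  simp [stdNormalPdf, gaussianPDFReal]

theorem stdNormalPdf_pos (x : ℝ) : 0 < stdNormalPdf x := by
  unfold stdNormalPdf
  positivity

theorem stdNormalPdf_neg (x : ℝ) : stdNormalPdf (-x) = stdNormalPdf x := by
  simp [stdNormalPdf]

theorem integrable_stdNormalPdf : Integrable stdNormalPdf :=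
  stdNormalPdf_eq_gaussianPDFReal ▸ integrable_gaussianPDFReal 0 1

theorem hasDerivAt_stdNormalPdf (x : ℝ) : HasDerivAt stdNormalPdf (-x * stdNormalPdf x) x := by
  have hsq : HasDerivAt (fun x : ℝ => -x ^ 2 / 2) (-x) x :=
    (((hasDerivAt_pow 2 x).neg).div_const 2).congr_deriv (by ring)
  exact (hsq.exp.const_mul _).congr_deriv (by unfold stdNormalPdf; ring)

theorem contDiff_stdNormalPdf : ContDiff ℝ ∞ stdNormalPdf := by
  unfold stdNormalPdf
  fun_prop

theorem hasStrictDerivAt_stdNormalCdf (x : ℝ) :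
    HasStrictDerivAt stdNormalCdf (stdNormalPdf x) x := by
  have hsplit : ∀ y, stdNormalCdf y = stdNormalCdf 0 + ∫ t in (0 : ℝ)..y, stdNormalPdf t :=
    fun y => by
      rw [← intervalIntegral.integral_Iic_sub_Iic integrable_stdNormalPdf.integrableOn
        integrable_stdNormalPdf.integrableOn, stdNormalCdf, stdNormalCdf]
      ring
  rw [funext hsplit]
  exact (contDiff_stdNormalPdf.continuous.integral_hasStrictDerivAt 0 x).const_add _

theorem strictMono_stdNormalCdf : StrictMono stdNormalCdf :=
  strictMono_of_deriv_pos fun x => by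
    rw [(hasStrictDerivAt_stdNormalCdf x).hasDerivAt.deriv]
    exact stdNormalPdf_pos x

theorem stdNormalCdf_zero : stdNormalCdf 0 = 1 / 2 := by
  have htotal : stdNormalCdf 0 + ∫ t in Ioi 0, stdNormalPdf t = 1 := by
    rw [stdNormalCdf, intervalIntegral.integral_Iic_add_Ioi integrable_stdNormalPdf.integrableOn
      integrable_stdNormalPdf.integrableOn, stdNormalPdf_eq_gaussianPDFReal,
      integral_gaussianPDFReal_eq_one 0 one_ne_zero]
  have hsymm : ∫ t in Ioi 0, stdNormalPdf t = stdNormalCdf 0 := by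
    simpa only [stdNormalCdf, stdNormalPdf_neg, neg_zero] using integral_comp_neg_Ioi 0 stdNormalPdf
  linarith

theorem hasDerivAt_inv_two_mul_stdNormalPdf (c : ℝ) :
    HasDerivAt (fun c => (2 * stdNormalPdf c)⁻¹) (c * (2 * stdNormalPdf c)⁻¹) c := by
  have hφ := (stdNormalPdf_pos c).ne'
  exact (((hasDerivAt_stdNormalPdf c).const_mul 2).inv (mul_ne_zero two_ne_zero hφ)).congr_deriv
    (by field_simp)

theorem absolutelyMonotoneOn_inv_two_mul_stdNormalPdf :
    AbsolutelyMonotoneOn (fun c => (2 * stdNormalPdf c)⁻¹) (Ioi 0) := by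
  have hpos (c : ℝ) : 0 < 2 * stdNormalPdf c := mul_pos two_pos (stdNormalPdf_pos c)
  exact .of_deriv_eq_mul isOpen_Ioi
    ((contDiff_const.mul contDiff_stdNormalPdf).inv fun c => (hpos c).ne').contDiffOn
    (fun c _ => (inv_pos.mpr (hpos c)).le) (absolutelyMonotoneOn_id.mono Ioi_subset_Ici_self)
    (funext fun c => (hasDerivAt_inv_two_mul_stdNormalPdf c).deriv)

section CriticalValue

variable {cv : ℝ → ℝ} (hcv : ∀ p ∈ Ioo (0 : ℝ) 1, stdNormalCdf (cv p) = 1 - p / 2)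
include hcv

theorem mapsTo_Ioi_of_stdNormalCdf_eq : MapsTo cv (Ioo 0 1) (Ioi 0) := fun p hp =>
  strictMono_stdNormalCdf.lt_iff_lt.mp (by rw [stdNormalCdf_zero, hcv p hp]; linarith [hp.2])

theorem hasDerivAt_of_stdNormalCdf_eq {p : ℝ} (hp : p ∈ Ioo 0 1) :
    HasDerivAt cv (-(2 * stdNormalPdf (cv p))⁻¹) p := by
  have hΦ := hasStrictDerivAt_stdNormalCdf (cv p)
  have hφ := (stdNormalPdf_pos (cv p)).ne'
  have hlin : HasDerivAt (fun q : ℝ => 1 - q / 2) (-(1 / 2)) p :=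
    ((hasDerivAt_id p).div_const 2).const_sub 1
  have hinv : HasDerivAt (hΦ.localInverse _ _ _ hφ) (stdNormalPdf (cv p))⁻¹ (1 - p / 2) :=
    hcv p hp ▸ (hΦ.to_localInverse hφ).hasDerivAt
  have hright := hΦ.eventually_right_inverse hφ
  rw [hcv p hp] at hright
  refine ((hinv.comp p hlin).congr_of_eventuallyEq ?_).congr_deriv ?_
  · filter_upwards [hlin.continuousAt.tendsto.eventually hright, isOpen_Ioo.mem_nhds hp]
      with q hq hqI
    exact strictMono_stdNormalCdf.injective (by rw [hcv q hqI, Function.comp_apply, hq])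
  · field_simp

end CriticalValue

/-- if Π is a probability measure on ℝ, cv₂(p) = Φ⁻¹(1−p/2) on (0,1), and
g₂(p) = ∫ (1/2)[exp(h·cv₂(p) − h²/2) + exp(−h·cv₂(p) − h²/2)] dΠ(h), then g₂ is
completely monotone on (0,1): for every k ≥ 0 and p ∈ (0,1), 0 ≤ (−1)^k g₂^{(k)}(p). -/
theorem stmt_6
    (Pi : Measure ℝ) [IsProbabilityMeasure Pi]
    (cv : ℝ → ℝ) (hcv : ∀ p ∈ Set.Ioo (0 : ℝ) 1, stdNormalCdf (cv p) = 1 - p / 2)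
    (g₂ : ℝ → ℝ)
    (hg₂ : ∀ p : ℝ, g₂ p =
      ∫ h, (1 / 2) * (Real.exp (h * cv p - h ^ 2 / 2) +
        Real.exp (-(h * cv p) - h ^ 2 / 2)) ∂Pi) :
    ∀ k : ℕ, ∀ p ∈ Set.Ioo (0 : ℝ) 1,
      0 ≤ (-1 : ℝ) ^ k * iteratedDeriv k g₂ p := by
  have hg₂_comp : g₂ = gaussianCoshTransform Pi ∘ cv := by
    ext p
    rw [hg₂, Function.comp_apply, gaussianCoshTransform]
    congr 1 with h
    simp only [cosh_eq, sub_eq_add_neg, exp_add, neg_div]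
    ring
  intro k p hp
  rw [hg₂_comp]
  exact ((absolutelyMonotoneOn_gaussianCoshTransform Pi).mono Ioi_subset_Ici_self)
    |>.neg_one_pow_mul_iteratedDeriv_comp_nonneg isOpen_Ioi isOpen_Ioo
      absolutelyMonotoneOn_inv_two_mul_stdNormalPdf (mapsTo_Ioi_of_stdNormalCdf_eq hcv)
      (fun _ hq => hasDerivAt_of_stdNormalCdf_eq hcv hq) k hp
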